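/- For any 0 ≤ τ < τ′, the function μ ↦ D(μ; τ, τ′) is strictly decreasing on (0, ∞). -/

import Mathlib

open MeasureTheory ProbabilityTheory Filter
open scoped Classical

noncomputable section

/-- The standard normal density. -/
def stdPdf (x : ℝ) : ℝ := (Real.sqrt (2 * Real.pi))⁻¹ * Real.exp (-(x ^ 2) / 2)

/-- The standard normal cumulative distribution function. -/
def Phi (t : ℝ) : ℝ := ∫ x in Set.Iic t, stdPdf x

/-- `D(μ; τ, τ')`. -/
def Dfun (μ τ τ' : ℝ) : ℝ := (Phi τ - Phi (τ - μ)) / (Phi τ' - Phi (τ' - μ))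

/-- Empirical cdf of a sample of size `n`. -/
def empCdf (n : ℕ) (X : Fin n → ℝ) (t : ℝ) : ℝ :=
  (n : ℝ)⁻¹ * ∑ i, if X i ≤ t then (1 : ℝ) else 0

/-- Upper envelope `F⁺ₐ`. -/
def envP (n : ℕ) (a : ℝ) (G : ℝ → ℝ) (t : ℝ) : ℝ :=
  (2 * G t + a ^ 2 / n + (a / Real.sqrt n) * Real.sqrt (a ^ 2 / n + 4 * G t - 4 * (G t) ^ 2)) /
    (2 * (1 + a ^ 2 / n))

/-- Lower envelope `F⁻ₐ`. -/
def envM (n : ℕ) (a : ℝ) (G : ℝ → ℝ) (t : ℝ) : ℝ :=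
  (2 * G t + a ^ 2 / n - (a / Real.sqrt n) * Real.sqrt (a ^ 2 / n + 4 * G t - 4 * (G t) ^ 2)) /
    (2 * (1 + a ^ 2 / n))

/-- Grid points `t_j = (j - 1)/√(2 log n)`. -/
def gridPt (n : ℕ) (j : ℕ) : ℝ := ((j : ℝ) - 1) / Real.sqrt (2 * Real.log n)

/-- Right-hand side ratio used in the defining equation for `μ̂⁽ʲ⁾`. -/
def ratioJ (n : ℕ) (a : ℝ) (X : Fin n → ℝ) (j : ℕ) : ℝ :=
  (Phi (gridPt n j) - envP n a (empCdf n X) (gridPt n j)) /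
    (Phi (gridPt n (j + 1)) - envM n a (empCdf n X) (gridPt n (j + 1)))

/-- `μ̂⁽ʲ⁾`: the solution of `D(μ; t_j, t_{j+1}) = ratio`, when it exists (else 0). -/
def muHatJ (n : ℕ) (a : ℝ) (X : Fin n → ℝ) (j : ℕ) : ℝ :=
  if h : ∃ μ > 0, Dfun μ (gridPt n j) (gridPt n (j + 1)) = ratioJ n a X j then h.choose else 0

/-- `ε̂⁽ʲ⁾ₐ`. -/
def epsHatJ (n : ℕ) (a : ℝ) (X : Fin n → ℝ) (j : ℕ) : ℝ :=
  if ∃ μ > 0, Dfun μ (gridPt n j) (gridPt n (j + 1)) = ratioJ n a X j then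
    (Phi (gridPt n j) - envP n a (empCdf n X) (gridPt n j)) /
      (Phi (gridPt n j) - Phi (gridPt n j - muHatJ n a X j))
  else 0

/-- The grid estimator `ε̂*ₐ = max_j ε̂⁽ʲ⁾ₐ`. -/
def epsHatStar (n : ℕ) (a : ℝ) (X : Fin n → ℝ) : ℝ :=
  sSup ((fun j => epsHatJ n a X j) '' (Set.Icc 1 (Nat.ceil (2 * Real.log n))))

/-- The statistic `W_n⁺`, as a function of a uniform sample. -/
def WnPlus (n : ℕ) (U : Fin n → ℝ) : ℝ :=
  sSup ((fun t => Real.sqrt n * |empCdf n U t - t| / Real.sqrt (t * (1 - t))) ''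
    (Set.Icc (1 / 2) (Phi (Real.sqrt (2 * Real.log n)))))

/-- The statistic `Y_n`, as a function of the sample, for underlying cdf `F`. -/
def Yn (n : ℕ) (F : ℝ → ℝ) (X : Fin n → ℝ) : ℝ :=
  sSup ((fun t => Real.sqrt n * |empCdf n X t - F t| / Real.sqrt (F t * (1 - F t))) ''
    (Set.Icc 0 (Real.sqrt (2 * Real.log n))))

/-- The statistic `W_n⁺⁺(c₀)`, as a function of the sample, for underlying cdf `F`. -/
def WnPP (c0 : ℝ) (n : ℕ) (F : ℝ → ℝ) (X : Fin n → ℝ) : ℝ :=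
  sSup ((fun x => Real.sqrt n * |empCdf n X x - F x| / Real.sqrt (F x * (1 - F x))) ''
    {x : ℝ | empCdf n X 0 - Real.sqrt (c0 * Real.log n / n) ≤ F x ∧
      F x ≤ Phi (Real.sqrt (2 * Real.log n))})

/-- cdf of the two-point Gaussian mixture `(1-ε)N(0,1) + εN(μ,1)`. -/
def twoPointCdf (ε μ : ℝ) (t : ℝ) : ℝ := (1 - ε) * Phi t + ε * Phi (t - μ)

/-- cdf of the one-sided Gaussian mixture `(1-ε)N(0,1) + ε ∫ N(μ,1) dH(μ)`. -/
def oneSidedCdf (ε : ℝ) (H : Measure ℝ) (t : ℝ) : ℝ :=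
  (1 - ε) * Phi t + ε * ∫ m, Phi (t - m) ∂H

/-- cdf of the Uniform(0,1) distribution. -/
def unifCdf (t : ℝ) : ℝ := max 0 (min t 1)

/-- `X₁, …, Xₙ` are i.i.d. with cdf `F` under `P`. -/
def IIDWithCdf {Ω : Type} [MeasurableSpace Ω] (P : Measure Ω) {n : ℕ}
    (X : Fin n → Ω → ℝ) (F : ℝ → ℝ) : Prop :=
  (∀ i, Measurable (X i)) ∧ iIndepFun X P ∧
    ∀ i t, P {ω | X i ω ≤ t} = ENNReal.ofReal (F t)

/-- The event that `F` lies inside the envelope on `[0, √(2 log n)]`. -/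
def EnvEvent (n : ℕ) (a : ℝ) (F : ℝ → ℝ) (X : Fin n → ℝ) : Prop :=
  ∀ t ∈ Set.Icc (0 : ℝ) (Real.sqrt (2 * Real.log n)),
    envM n a (empCdf n X) t ≤ F t ∧ F t ≤ envP n a (empCdf n X) t

/-- The detection boundary `ρ*(β)`. -/
def rhoStar (β : ℝ) : ℝ :=
  if β ≤ 3 / 4 then β - 1 / 2 else (1 - Real.sqrt (1 - β)) ^ 2


/-!
Writing `Φ(τ) − Φ(τ − μ) = ∫₀^μ φ(τ − t) dt`, the function `D(·; τ, τ')` is a ratio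
`∫₀^μ f / ∫₀^μ g` of integrals of positive functions whose quotient `f / g` is strictly decreasing:
`φ(τ − t) / φ(τ' − t)` is a multiple of `exp (−(τ' − τ) t)`. For such a ratio the numerator of the
derivative, `f μ ∫₀^μ g − g μ ∫₀^μ f = ∫₀^μ (f μ g t − g μ f t) dt`, is negative.
-/

open intervalIntegral

section RatioOfIntegrals

variable {f g : ℝ → ℝ}

lemma mul_integral_lt_mul_integral_of_strictAntiOn_div (hf : Continuous f) (hg : Continuous g)
    (hg_pos : ∀ t, 0 ≤ t → 0 < g t) (hfg : StrictAntiOn (fun t => f t / g t) (Set.Ici 0))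
    {μ : ℝ} (hμ : 0 < μ) :
    f μ * ∫ t in (0 : ℝ)..μ, g t < g μ * ∫ t in (0 : ℝ)..μ, f t := by
  have hle : ∀ t ∈ Set.Icc 0 μ, f μ * g t ≤ g μ * f t := by
    intro t ht
    have := hfg.antitoneOn ht.1 (le_trans ht.1 ht.2) ht.2
    rw [div_le_div_iff₀ (hg_pos μ hμ.le) (hg_pos t ht.1)] at this
    linarith
  have hlt : f μ * g 0 < g μ * f 0 := by
    have := hfg (Set.mem_Ici.2 le_rfl) hμ.le hμ
    rw [div_lt_div_iff₀ (hg_pos μ hμ.le) (hg_pos 0 le_rfl)] at this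
    linarith
  rw [← intervalIntegral.integral_const_mul, ← intervalIntegral.integral_const_mul]
  exact integral_lt_integral_of_continuousOn_of_le_of_exists_lt hμ (by fun_prop) (by fun_prop)
    (fun t ht => hle t (Set.Ioc_subset_Icc_self ht)) ⟨0, ⟨le_rfl, hμ.le⟩, hlt⟩

lemma strictAntiOn_integral_div_integral (hf : Continuous f) (hg : Continuous g)
    (hg_pos : ∀ t, 0 ≤ t → 0 < g t) (hfg : StrictAntiOn (fun t => f t / g t) (Set.Ici 0)) :
    StrictAntiOn (fun μ => (∫ t in (0 : ℝ)..μ, f t) / ∫ t in (0 : ℝ)..μ, g t) (Set.Ioi 0) := by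
  have hG_pos : ∀ μ : ℝ, 0 < μ → 0 < ∫ t in (0 : ℝ)..μ, g t := fun μ hμ =>
    intervalIntegral_pos_of_pos_on (hg.intervalIntegrable _ _)
      (fun t ht => hg_pos t ht.1.le) hμ
  have hderiv : ∀ μ : ℝ, 0 < μ → HasDerivAt
      (fun μ => (∫ t in (0 : ℝ)..μ, f t) / ∫ t in (0 : ℝ)..μ, g t)
      ((f μ * (∫ t in (0 : ℝ)..μ, g t) - (∫ t in (0 : ℝ)..μ, f t) * g μ) /
        (∫ t in (0 : ℝ)..μ, g t) ^ 2) μ := fun μ hμ =>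
    (hf.integral_hasStrictDerivAt 0 μ).hasDerivAt.div
      (hg.integral_hasStrictDerivAt 0 μ).hasDerivAt (hG_pos μ hμ).ne'
  refine strictAntiOn_of_deriv_neg (convex_Ioi 0)
    (fun μ hμ => (hderiv μ hμ).continuousAt.continuousWithinAt) fun μ hμ => ?_
  rw [interior_Ioi] at hμ
  rw [(hderiv μ hμ).deriv]
  refine div_neg_of_neg_of_pos ?_ (pow_pos (hG_pos μ hμ) 2)
  linarith [mul_integral_lt_mul_integral_of_strictAntiOn_div hf hg hg_pos hfg hμ]

end RatioOfIntegrals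

lemma stdPdf_eq_gaussianPDFReal : stdPdf = gaussianPDFReal 0 1 := by
  ext x
  simp [stdPdf, gaussianPDFReal]

lemma stdPdf_pos (x : ℝ) : 0 < stdPdf x := by
  rw [stdPdf_eq_gaussianPDFReal]
  exact gaussianPDFReal_pos 0 1 x one_ne_zero

@[fun_prop]
lemma continuous_stdPdf : Continuous stdPdf := by
  unfold stdPdf
  fun_prop

lemma integrable_stdPdf : Integrable stdPdf := by
  rw [stdPdf_eq_gaussianPDFReal]
  exact integrable_gaussianPDFReal 0 1

lemma Phi_sub_Phi_eq_integral (a b : ℝ) : Phi b - Phi a = ∫ x in a..b, stdPdf x := by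
  unfold Phi
  exact integral_Iic_sub_Iic integrable_stdPdf.integrableOn integrable_stdPdf.integrableOn

lemma Phi_sub_Phi_sub_eq_integral (τ μ : ℝ) :
    Phi τ - Phi (τ - μ) = ∫ t in (0 : ℝ)..μ, stdPdf (τ - t) := by
  rw [integral_comp_sub_left stdPdf τ, sub_zero, Phi_sub_Phi_eq_integral]

lemma stdPdf_sub_div_stdPdf_sub (τ τ' t : ℝ) :
    stdPdf (τ - t) / stdPdf (τ' - t) = Real.exp ((τ' ^ 2 - τ ^ 2) / 2 - (τ' - τ) * t) := by
  unfold stdPdf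
  rw [mul_div_mul_left _ _ (inv_ne_zero (Real.sqrt_pos.2 (by positivity)).ne'), ← Real.exp_sub]
  ring_nf

lemma strictAnti_stdPdf_sub_div_stdPdf_sub {τ τ' : ℝ} (hττ' : τ < τ') :
    StrictAnti fun t => stdPdf (τ - t) / stdPdf (τ' - t) := by
  intro s t hst
  simp only [stdPdf_sub_div_stdPdf_sub, Real.exp_lt_exp]
  nlinarith

theorem stmt14_general (τ τ' : ℝ) (hττ' : τ < τ') :
    StrictAntiOn (fun μ => Dfun μ τ τ') (Set.Ioi 0) := by
  simp only [Dfun, Phi_sub_Phi_sub_eq_integral]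
  exact strictAntiOn_integral_div_integral (by fun_prop) (by fun_prop) (fun t _ => stdPdf_pos _)
    ((strictAnti_stdPdf_sub_div_stdPdf_sub hττ').strictAntiOn _)

/-- `μ ↦ D(μ; τ, τ')` is strictly decreasing on `(0, ∞)`. -/
theorem stmt14 (τ τ' : ℝ) (hτ : 0 ≤ τ) (hττ' : τ < τ') :
    StrictAntiOn (fun μ => Dfun μ τ τ') (Set.Ioi 0) :=
  stmt14_general τ τ' hττ'

end
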